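/- arXiv:2010.13499 — 6 statements merged into one kernel-verified Lean document; each statement's English description precedes it below -/
import Mathlib

section
/- For every γ ∈ [0,1] and every ε ≥ 0, there exist α ∈ (0, (√5−1)/2) such that the weighted Hamming similarity configuration 1 − α/(1−α²) exceeds (2α²/(α+2α²))·(1+ε); consequently no weighted Hamming similarity H_γ relatively approximates the Dice score with finite error. Formally: for all ε ≥ 0, there exists α ∈ (0,1) with 1 − α/(1−α²) − (2α/(1+2α))·(1+ε) > 0. -/
open Filter Topology Set

/-! The gap `H_γ - D(1 + ε)` is a continuous function of `α` near `0` with value `1` there,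
so it stays positive for all sufficiently small `α > 0`. -/

lemma exists_mem_Ioo_pos_of_continuousAt {f : ℝ → ℝ} {a b : ℝ} (hab : a < b)
    (hf : ContinuousAt f a) (hfa : 0 < f a) : ∃ x ∈ Ioo a b, 0 < f x := by
  have hpos : ∀ᶠ x in 𝓝[>] a, 0 < f x :=
    (hf.eventually (lt_mem_nhds hfa)).filter_mono nhdsWithin_le_nhds
  have hIoo : ∀ᶠ x in 𝓝[>] a, x ∈ Ioo a b := Ioo_mem_nhdsGT hab
  exact (hIoo.and hpos).exists

theorem weighted_hamming_no_relative_approx :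
    ∀ ε : ℝ, 0 ≤ ε →
      ∃ α ∈ Set.Ioo (0:ℝ) 1,
        1 - α / (1 - α ^ 2) - (2 * α / (1 + 2 * α)) * (1 + ε) > 0 := by
  intro ε _
  have hcont : ContinuousAt
      (fun α : ℝ => 1 - α / (1 - α ^ 2) - (2 * α / (1 + 2 * α)) * (1 + ε)) 0 := by
    fun_prop (disch := norm_num)
  exact exists_mem_Ioo_pos_of_continuousAt one_pos hcont (by norm_num)
end

section
/- lim_{α→0⁺} [1 − α/(1−α²) − 2α/(1+2α)] = 1; hence the absolute approximation error between the weighted Hamming similarity and the Dice score is 1 (the trivial bound for similarities valued in [0,1]). -/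
/-!
Both similarities lie in `[0, 1]` on the admissible range `0 < α < (√5 - 1)/2` (the condition
`α² + α < 1` keeping `H_γ ≥ 0`), so their distance is at most `1`. As `α → 0⁺` one has `H_γ → 1`
and `D → 0`, so the distance `1` is approached and is the least upper bound.
-/

open Filter Set Topology

/-- `H_γ(y, ỹ)` for `|y ∖ ỹ| = 0`, `|ỹ ∖ y| = αd`, `|y ∩ ỹ| = α²d`. -/
noncomputable def weightedHammingSim (α : ℝ) : ℝ := 1 - α / (1 - α ^ 2)

/-- `D(y, ỹ)` in the same configuration. -/
noncomputable def diceSim (α : ℝ) : ℝ := 2 * α / (1 + 2 * α)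

lemma tendsto_weightedHammingSim_sub_diceSim :
    Tendsto (fun α => weightedHammingSim α - diceSim α) (𝓝[>] 0) (𝓝 1) := by
  have hcont : ContinuousAt (fun α => weightedHammingSim α - diceSim α) 0 := by
    unfold weightedHammingSim diceSim
    fun_prop (disch := norm_num)
  simpa [weightedHammingSim, diceSim] using hcont.tendsto.mono_left nhdsWithin_le_nhds

lemma sq_add_self_lt_one {α : ℝ} (h₀ : 0 ≤ α) (h : α < (Real.sqrt 5 - 1) / 2) :
    α ^ 2 + α < 1 := by
  have h5 : Real.sqrt 5 ^ 2 = 5 := Real.sq_sqrt (by norm_num)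
  nlinarith [Real.sqrt_nonneg 5]

lemma weightedHammingSim_mem_Icc {α : ℝ} (h₀ : 0 ≤ α) (h : α ^ 2 + α ≤ 1) :
    weightedHammingSim α ∈ Icc 0 1 := by
  have hden : 0 < 1 - α ^ 2 := by nlinarith
  have hle : α / (1 - α ^ 2) ≤ 1 := (div_le_one hden).mpr (by linarith)
  have hnonneg : 0 ≤ α / (1 - α ^ 2) := div_nonneg h₀ hden.le
  exact ⟨by unfold weightedHammingSim; linarith, by unfold weightedHammingSim; linarith⟩

lemma diceSim_mem_Icc {α : ℝ} (h₀ : 0 ≤ α) : diceSim α ∈ Icc 0 1 := by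
  have hden : 0 < 1 + 2 * α := by linarith
  exact ⟨div_nonneg (by linarith) hden.le, (div_le_one hden).mpr (by linarith)⟩

lemma abs_weightedHammingSim_sub_diceSim_le_one {α : ℝ} (h₀ : 0 ≤ α)
    (h : α < (Real.sqrt 5 - 1) / 2) : |weightedHammingSim α - diceSim α| ≤ 1 := by
  obtain ⟨hH₀, hH₁⟩ := weightedHammingSim_mem_Icc h₀ (sq_add_self_lt_one h₀ h).le
  obtain ⟨hD₀, hD₁⟩ := diceSim_mem_Icc h₀
  exact abs_sub_le_of_nonneg_of_le hH₀ hH₁ hD₀ hD₁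

theorem weighted_hamming_dice_absolute_error_one :
    Filter.Tendsto (fun α : ℝ => 1 - α / (1 - α ^ 2) - 2 * α / (1 + 2 * α))
      (nhdsWithin 0 (Set.Ioi 0)) (nhds 1) ∧
    IsLUB {e : ℝ | ∃ α ∈ Set.Ioo (0:ℝ) ((Real.sqrt 5 - 1) / 2),
        e = |(1 - α / (1 - α ^ 2)) - 2 * α / (1 + 2 * α)|} 1 := by
  have htend := tendsto_weightedHammingSim_sub_diceSim
  refine ⟨htend, isLUB_of_mem_closure ?_ ?_⟩
  · rintro e ⟨α, ⟨hα₀, hα⟩, rfl⟩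
    exact abs_weightedHammingSim_sub_diceSim_le_one hα₀.le hα
  · have hφ : (0 : ℝ) < (Real.sqrt 5 - 1) / 2 := by
      have : (1 : ℝ) < Real.sqrt 5 := by
        rw [Real.lt_sqrt zero_le_one]
        norm_num
      linarith
    refine mem_closure_of_tendsto (by simpa using htend.abs) ?_
    filter_upwards [Ioo_mem_nhdsGT hφ] with α hα
    exact ⟨α, hα, rfl⟩
end

section
/- For α > 0 and b ∈ [0,1], the function g(b) = |b/(b+α(1−b)) − b/(b+(1−b)/2)| attains its maximum over [0,1] at b = (α − √(2α))/(α − 2) (for α ≠ 2), and the maximum value is |(√(2α)−1)/(√(2α)+1)|. -/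
/-! Writing `s = √(2α)`, the gap is `|1 - 2α| · b(1 - b) / ((b + α(1 - b))(1 + b))`, and the identity
`(b + α(1 - b))(1 + b) - (1 + s)² b(1 - b) = (2b - s(1 - b))² / 2` bounds it by
`|1 - 2α| / (1 + s)² = |(s - 1)/(s + 1)|`, with equality exactly at `b = s / (s + 2)`. -/

open Set

lemma tversky_denom_pos {α b : ℝ} (hα : 0 < α) (hb : b ∈ Icc (0 : ℝ) 1) :
    0 < b + α * (1 - b) := by
  rcases hb.1.eq_or_lt with rfl | hb0
  · simpa using hα
  · have : 0 ≤ α * (1 - b) := mul_nonneg hα.le (sub_nonneg.2 hb.2)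
    linarith

lemma tversky_sub_dice_eq {α b : ℝ} (hT : b + α * (1 - b) ≠ 0) (hb : 1 + b ≠ 0) :
    b / (b + α * (1 - b)) - b / (b + (1 - b) / 2) =
      (1 - 2 * α) * (b * (1 - b)) / ((b + α * (1 - b)) * (1 + b)) := by
  rw [show b + (1 - b) / 2 = (1 + b) / 2 by ring]
  field_simp
  ring

lemma one_add_sq_mul_le {α s : ℝ} (hsα : s ^ 2 = 2 * α) (b : ℝ) :
    (1 + s) ^ 2 * (b * (1 - b)) ≤ (b + α * (1 - b)) * (1 + b) := by
  obtain rfl : α = s ^ 2 / 2 := by linarith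
  have key : (b + s ^ 2 / 2 * (1 - b)) * (1 + b) - (1 + s) ^ 2 * (b * (1 - b)) =
      (2 * b - s * (1 - b)) ^ 2 / 2 := by ring
  linarith [sq_nonneg (2 * b - s * (1 - b))]

lemma abs_tversky_sub_dice_le {α s b : ℝ} (hα : 0 < α) (hs : 0 ≤ s) (hsα : s ^ 2 = 2 * α)
    (hb : b ∈ Icc (0 : ℝ) 1) :
    |b / (b + α * (1 - b)) - b / (b + (1 - b) / 2)| ≤ |(s - 1) / (s + 1)| := by
  have hT := tversky_denom_pos hα hb
  have hD : 0 < 1 + b := by linarith [hb.1]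
  have hbb : 0 ≤ b * (1 - b) := mul_nonneg hb.1 (sub_nonneg.2 hb.2)
  have hgap : |1 - 2 * α| = |(s - 1) / (s + 1)| * (1 + s) ^ 2 := by
    rw [abs_div, abs_of_pos (by linarith : 0 < s + 1), ← hsα,
      show 1 - s ^ 2 = -((s - 1) * (s + 1)) by ring, abs_neg, abs_mul,
      abs_of_pos (by linarith : 0 < s + 1)]
    field_simp
    ring
  rw [tversky_sub_dice_eq hT.ne' hD.ne', abs_div, abs_mul, abs_of_nonneg hbb,
    abs_of_pos (mul_pos hT hD), div_le_iff₀ (mul_pos hT hD), hgap, mul_assoc]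
  exact mul_le_mul_of_nonneg_left (one_add_sq_mul_le hsα b) (abs_nonneg _)

lemma tversky_sub_dice_at_opt {α s : ℝ} (hs : 0 < s) (hsα : s ^ 2 = 2 * α) :
    s / (s + 2) / (s / (s + 2) + α * (1 - s / (s + 2))) -
        s / (s + 2) / (s / (s + 2) + (1 - s / (s + 2)) / 2) = -((s - 1) / (s + 1)) := by
  obtain rfl : α = s ^ 2 / 2 := by linarith
  have h2 : s + 2 ≠ 0 := by positivity
  have hT : s / (s + 2) + s ^ 2 / 2 * (1 - s / (s + 2)) = s * (s + 1) / (s + 2) := by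
    field_simp
    ring
  have hD : s / (s + 2) + (1 - s / (s + 2)) / 2 = (s + 1) / (s + 2) := by
    field_simp
    ring
  have h1 : s + 1 ≠ 0 := by positivity
  rw [hT, hD]
  field_simp
  ring

lemma sub_sqrt_div_sub_two_eq {α s : ℝ} (hα2 : α ≠ 2) (hs : 0 ≤ s) (hsα : s ^ 2 = 2 * α) :
    (α - s) / (α - 2) = s / (s + 2) := by
  rw [div_eq_div_iff (sub_ne_zero.2 hα2) (by linarith)]
  linear_combination -hsα

lemma div_add_two_mem_Icc {s : ℝ} (hs : 0 ≤ s) : s / (s + 2) ∈ Icc (0 : ℝ) 1 :=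
  ⟨by positivity, (div_le_one (by linarith)).2 (by linarith)⟩

theorem tversky_dice_gap_max (α : ℝ) (hα : 0 < α) (hα2 : α ≠ 2) :
    let g : ℝ → ℝ := fun b => |b / (b + α * (1 - b)) - b / (b + (1 - b) / 2)|
    let bmax : ℝ := (α - Real.sqrt (2 * α)) / (α - 2)
    bmax ∈ Set.Icc (0:ℝ) 1 ∧ (∀ b ∈ Set.Icc (0:ℝ) 1, g b ≤ g bmax) ∧
      g bmax = |(Real.sqrt (2 * α) - 1) / (Real.sqrt (2 * α) + 1)| := by
  intro g bmax
  have hs : 0 < Real.sqrt (2 * α) := Real.sqrt_pos.2 (by positivity)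
  have hsα : Real.sqrt (2 * α) ^ 2 = 2 * α := Real.sq_sqrt (by positivity)
  have hbmax : bmax = Real.sqrt (2 * α) / (Real.sqrt (2 * α) + 2) :=
    sub_sqrt_div_sub_two_eq hα2 hs.le hsα
  have hval : g bmax = |(Real.sqrt (2 * α) - 1) / (Real.sqrt (2 * α) + 1)| := by
    simp only [g, hbmax, tversky_sub_dice_at_opt hs hsα, abs_neg]
  refine ⟨hbmax ▸ div_add_two_mem_Icc hs.le, fun b hb => ?_, hval⟩
  rw [hval]
  exact abs_tversky_sub_dice_le hα hs.le hsα hb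
end

section
/- For α, β > 0, the absolute approximation error sup_{a,b,c ≥ 0, a+b+c=1} |b/(b+αa+βc) − b/(b+0.5a+0.5c)| equals max(|(√(2α)−1)/(√(2α)+1)|, |(√(2β)−1)/(√(2β)+1)|). -/
/-!
Write `s = a + c` and `α a + β c = γ s`, so that `γ` lies between `α` and `β`. For fixed `γ`,
with `t = √(2γ)`, the gap equals `(1/2 - γ) b s / ((b + γ s)(b + s/2))`, and AM-GM
(`2 (b + γ s)(b + s/2) - b s (t + 1)² = 2 (b - t s / 2)²`) bounds it by `|(t - 1)/(t + 1)|`,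
with equality at `b : s = t : 2`. Since `t ↦ (t - 1)/(t + 1)` is monotone, the absolute value of
this bound over `γ` between `α` and `β` is largest at `γ = α` or `γ = β`.
-/

open Set

noncomputable def tverskyDiceError (γ : ℝ) : ℝ :=
  |(Real.sqrt (2 * γ) - 1) / (Real.sqrt (2 * γ) + 1)|

lemma sub_one_div_add_one_le_of_le {s t : ℝ} (hs : -1 < s) (hst : s ≤ t) :
    (s - 1) / (s + 1) ≤ (t - 1) / (t + 1) := by
  rw [div_le_div_iff₀ (by linarith) (by linarith)]
  nlinarith

lemma tverskyDiceError_le_max_of_mem_uIcc {α β γ : ℝ} (hγ : γ ∈ uIcc α β) :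
    tverskyDiceError γ ≤ max (tverskyDiceError α) (tverskyDiceError β) := by
  have mono {x y : ℝ} (hxy : x ≤ y) :
      (Real.sqrt (2 * x) - 1) / (Real.sqrt (2 * x) + 1) ≤
        (Real.sqrt (2 * y) - 1) / (Real.sqrt (2 * y) + 1) :=
    sub_one_div_add_one_le_of_le (by linarith [Real.sqrt_nonneg (2 * x)])
      (Real.sqrt_le_sqrt (by linarith))
  rcases mem_uIcc.1 hγ with ⟨hαγ, hγβ⟩ | ⟨hβγ, hγα⟩
  · exact abs_le_max_abs_abs (mono hαγ) (mono hγβ)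
  · rw [max_comm]
    exact abs_le_max_abs_abs (mono hβγ) (mono hγα)

lemma exists_mem_uIcc_mul_add_mul_eq (α β : ℝ) {a c : ℝ} (ha : 0 ≤ a) (hc : 0 ≤ c) :
    ∃ γ ∈ uIcc α β, α * a + β * c = γ * (a + c) := by
  rcases (add_nonneg ha hc).eq_or_lt with hs | hs
  · obtain ⟨rfl, rfl⟩ : a = 0 ∧ c = 0 := ⟨by linarith, by linarith⟩
    exact ⟨α, left_mem_uIcc, by ring⟩
  · refine ⟨(α * a + β * c) / (a + c), ?_, by field_simp⟩
    rw [← segment_eq_uIcc]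
    exact ⟨a / (a + c), c / (a + c), by positivity, by positivity, by field_simp,
      by simp only [smul_eq_mul]; field_simp⟩

lemma abs_div_sub_div_le_tverskyDiceError {γ b s : ℝ} (hγ : 0 < γ) (hb : 0 ≤ b) (hs : 0 ≤ s)
    (hbs : 0 < b + s) :
    |b / (b + γ * s) - b / (b + 0.5 * s)| ≤ tverskyDiceError γ := by
  set t := Real.sqrt (2 * γ)
  have ht : 0 < t := Real.sqrt_pos.2 (by linarith)
  have ht2 : t ^ 2 = 2 * γ := Real.sq_sqrt (by linarith)
  have hD1 : 0 < b + γ * s := by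
    rcases hs.eq_or_lt with rfl | hs
    · simpa using hbs
    · positivity
  have hD2 : 0 < b + 0.5 * s := by linarith
  have hgap : b / (b + γ * s) - b / (b + 0.5 * s) =
      (1 / 2 - γ) * (b * s / ((b + γ * s) * (b + 0.5 * s))) := by
    rw [div_sub_div _ _ hD1.ne' hD2.ne', mul_div_assoc']
    ring
  have herror : tverskyDiceError γ = |1 / 2 - γ| * (2 / (t + 1) ^ 2) := by
    rw [tverskyDiceError, abs_sub_comm, ← abs_of_pos (by positivity : (0 : ℝ) < 2 / (t + 1) ^ 2),
      ← abs_mul]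
    congr 1
    field_simp
    linear_combination (1 + t) * ht2
  have amgm : b * s * (t + 1) ^ 2 ≤ 2 * ((b + γ * s) * (b + 0.5 * s)) := by
    have hsq : 2 * ((b + γ * s) * (b + 0.5 * s)) - b * s * (t + 1) ^ 2 =
        2 * (b - t * s / 2) ^ 2 := by
      linear_combination -(b * s + s ^ 2 / 2) * ht2
    linarith [sq_nonneg (b - t * s / 2)]
  rw [hgap, herror, abs_mul,
    abs_of_nonneg (by positivity : 0 ≤ b * s / ((b + γ * s) * (b + 0.5 * s)))]
  refine mul_le_mul_of_nonneg_left ?_ (abs_nonneg _)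
  rwa [div_le_div_iff₀ (by positivity) (by positivity)]

lemma exists_abs_div_sub_div_eq_tverskyDiceError {γ : ℝ} (hγ : 0 < γ) :
    ∃ b s : ℝ, 0 ≤ b ∧ 0 ≤ s ∧ b + s = 1 ∧
      |b / (b + γ * s) - b / (b + 0.5 * s)| = tverskyDiceError γ := by
  set t := Real.sqrt (2 * γ)
  have ht : 0 < t := Real.sqrt_pos.2 (by linarith)
  have ht2 : t ^ 2 = 2 * γ := Real.sq_sqrt (by linarith)
  refine ⟨t / (t + 2), 2 / (t + 2), by positivity, by positivity, by field_simp, ?_⟩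
  rw [tverskyDiceError, ← abs_neg]
  congr 1
  field_simp
  linear_combination -(t + 1) * ht2

theorem tversky_dice_absolute_error (α β : ℝ) (hα : 0 < α) (hβ : 0 < β) :
    IsGreatest
      {e : ℝ | ∃ a b c : ℝ, 0 ≤ a ∧ 0 ≤ b ∧ 0 ≤ c ∧ a + b + c = 1 ∧
        e = |b / (b + α * a + β * c) - b / (b + 0.5 * a + 0.5 * c)|}
      (max (|(Real.sqrt (2 * α) - 1) / (Real.sqrt (2 * α) + 1)|)
           (|(Real.sqrt (2 * β) - 1) / (Real.sqrt (2 * β) + 1)|)) := by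
  change IsGreatest _ (max (tverskyDiceError α) (tverskyDiceError β))
  constructor
  · rcases le_total (tverskyDiceError β) (tverskyDiceError α) with h | h
    · obtain ⟨b, s, hb, hs, hbs, heq⟩ := exists_abs_div_sub_div_eq_tverskyDiceError hα
      refine ⟨s, b, 0, hs, hb, le_rfl, by linarith, ?_⟩
      simpa [max_eq_left h] using heq.symm
    · obtain ⟨b, s, hb, hs, hbs, heq⟩ := exists_abs_div_sub_div_eq_tverskyDiceError hβ
      refine ⟨0, b, s, le_rfl, hb, hs, by linarith, ?_⟩
      simpa [max_eq_right h] using heq.symm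
  · rintro e ⟨a, b, c, ha, hb, hc, habc, rfl⟩
    obtain ⟨γ, hγ, hmean⟩ := exists_mem_uIcc_mul_add_mul_eq α β ha hc
    have hγpos : 0 < γ := (lt_min hα hβ).trans_le hγ.1
    calc |b / (b + α * a + β * c) - b / (b + 0.5 * a + 0.5 * c)|
        = |b / (b + γ * (a + c)) - b / (b + 0.5 * (a + c))| := by
          rw [add_assoc b, hmean, add_assoc b, ← mul_add]
      _ ≤ tverskyDiceError γ :=
          abs_div_sub_div_le_tverskyDiceError hγpos hb (add_nonneg ha hc) (by linarith)
      _ ≤ max (tverskyDiceError α) (tverskyDiceError β) :=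
          tverskyDiceError_le_max_of_mem_uIcc hγ
end

section
/- For α, β > 0, max over the sets {(a,b,c) : a,b,c ≥ 0, 0 < a+b+c ≤ 1} of the two ratios (b+0.5a+0.5c)/(b+αa+βc) and (b+αa+βc)/(b+0.5a+0.5c) equals max(2α, 2β, 1/(2α), 1/(2β)); hence the relative approximation error between the Tversky index T_{α,β} and the Dice score is max(2α,2β,0.5/α,0.5/β) − 1. -/
/-!
Both ratios compare two weighted sums `b + p a + q c` and `b + r a + s c` of the same nonnegative
masses, so each is at most the largest termwise ratio among `1, p / r, q / s`. For the two
orientations these are `1, 1/(2α), 1/(2β)` and `1, 2α, 2β`, and `1 ≤ max (2α) (1/(2α))`.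
Conversely the vertices `a = 1` and `c = 1` of the simplex realise `1/(2α), 2α` and
`1/(2β), 2β` exactly.
-/

def tverskyDiceRatios (α β : ℝ) : Set ℝ :=
  {e : ℝ | ∃ a b c : ℝ,
    0 ≤ a ∧ 0 ≤ b ∧ 0 ≤ c ∧ 0 < a + b + c ∧ a + b + c ≤ 1 ∧
    (e = (b + 0.5 * a + 0.5 * c) / (b + α * a + β * c) ∨
     e = (b + α * a + β * c) / (b + 0.5 * a + 0.5 * c))}

lemma weighted_sum_pos {a b c r s : ℝ} (hr : 0 < r) (hs : 0 < s) (ha : 0 ≤ a) (hb : 0 ≤ b)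
    (hc : 0 ≤ c) (habc : 0 < a + b + c) : 0 < b + r * a + s * c := by
  set m := min 1 (min r s)
  have hm : 0 < m := lt_min one_pos (lt_min hr hs)
  have hmr : m ≤ r := (min_le_right _ _).trans (min_le_left _ _)
  have hms : m ≤ s := (min_le_right _ _).trans (min_le_right _ _)
  nlinarith [min_le_left 1 (min r s), mul_le_mul_of_nonneg_right hmr ha,
    mul_le_mul_of_nonneg_right hms hc, mul_pos hm habc]

lemma weighted_ratio_le {a b c p q r s M : ℝ} (ha : 0 ≤ a) (hb : 0 ≤ b) (hc : 0 ≤ c)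
    (hden : 0 < b + r * a + s * c) (hM : 1 ≤ M) (hp : p ≤ M * r) (hq : q ≤ M * s) :
    (b + p * a + q * c) / (b + r * a + s * c) ≤ M := by
  rw [div_le_iff₀ hden]
  nlinarith [mul_le_mul_of_nonneg_right hM hb, mul_le_mul_of_nonneg_right hp ha,
    mul_le_mul_of_nonneg_right hq hc]

lemma half_le_mul_of_one_div_two_mul_le {x M : ℝ} (hx : 0 < x) (h : 1 / (2 * x) ≤ M) :
    0.5 ≤ M * x := by
  rw [div_le_iff₀ (by positivity)] at h
  linarith

lemma vertex_a_mem_tverskyDiceRatios (α β : ℝ) :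
    1 / (2 * α) ∈ tverskyDiceRatios α β ∧ 2 * α ∈ tverskyDiceRatios α β :=
  ⟨⟨1, 0, 0, by norm_num, le_rfl, le_rfl, by norm_num, by norm_num,
      Or.inl (by norm_num; ring)⟩,
   ⟨1, 0, 0, by norm_num, le_rfl, le_rfl, by norm_num, by norm_num,
      Or.inr (by norm_num; ring)⟩⟩

lemma vertex_c_mem_tverskyDiceRatios (α β : ℝ) :
    1 / (2 * β) ∈ tverskyDiceRatios α β ∧ 2 * β ∈ tverskyDiceRatios α β :=
  ⟨⟨0, 0, 1, le_rfl, le_rfl, by norm_num, by norm_num, by norm_num,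
      Or.inl (by norm_num; ring)⟩,
   ⟨0, 0, 1, le_rfl, le_rfl, by norm_num, by norm_num, by norm_num,
      Or.inr (by norm_num; ring)⟩⟩

theorem tversky_dice_relative_error (α β : ℝ) (hα : 0 < α) (hβ : 0 < β) :
    IsGreatest
      {e : ℝ | ∃ a b c : ℝ, 0 ≤ a ∧ 0 ≤ b ∧ 0 ≤ c ∧ 0 < a + b + c ∧ a + b + c ≤ 1 ∧
        (e = (b + 0.5 * a + 0.5 * c) / (b + α * a + β * c) ∨
         e = (b + α * a + β * c) / (b + 0.5 * a + 0.5 * c))}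
      (max (max (2 * α) (2 * β)) (max (1 / (2 * α)) (1 / (2 * β)))) := by
  change IsGreatest (tverskyDiceRatios α β) _
  set M := max (max (2 * α) (2 * β)) (max (1 / (2 * α)) (1 / (2 * β)))
  obtain ⟨hα_inv_mem, hα_mem⟩ := vertex_a_mem_tverskyDiceRatios α β
  obtain ⟨hβ_inv_mem, hβ_mem⟩ := vertex_c_mem_tverskyDiceRatios α β
  refine ⟨max_rec' _ (max_rec' _ hα_mem hβ_mem) (max_rec' _ hα_inv_mem hβ_inv_mem), ?_⟩
  have h2α : 2 * α ≤ M := le_max_of_le_left (le_max_left _ _)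
  have h2β : 2 * β ≤ M := le_max_of_le_left (le_max_right _ _)
  have hα_half : 0.5 ≤ M * α :=
    half_le_mul_of_one_div_two_mul_le hα (le_max_of_le_right (le_max_left _ _))
  have hβ_half : 0.5 ≤ M * β :=
    half_le_mul_of_one_div_two_mul_le hβ (le_max_of_le_right (le_max_right _ _))
  have hM : 1 ≤ M := by nlinarith
  rintro e ⟨a, b, c, ha, hb, hc, habc, -, rfl | rfl⟩
  · exact weighted_ratio_le ha hb hc (weighted_sum_pos hα hβ ha hb hc habc) hM hα_half hβ_half
  · exact weighted_ratio_le ha hb hc (weighted_sum_pos (by norm_num) (by norm_num) ha hb hc habc)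
      hM (by linarith) (by linarith)
end

section
/- The absolute approximation error between T_{α,α} and Dice, namely |(√(2α)−1)/(√(2α)+1)|, is strictly decreasing in α on (0, 1/2), equal to 0 at α = 1/2, and strictly increasing on (1/2, ∞); moreover it tends to 1 as α → 0⁺ or α → ∞. -/
/-!
Write `s = √(2α)`. The signed error `(s - 1) / (s + 1) = 1 - 2 / (s + 1)` is a composition of
increasing maps, vanishes at `α = 1/2`, and tends to `-1` as `α → 0⁺` and to `1` as `α → ∞`.
Its absolute value therefore decreases where it is nonpositive and increases where it is
nonnegative.
-/

open Filter Set Real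

section AbsOfStrictMono

variable {α β : Type*} [Preorder α] [AddCommGroup β] [LinearOrder β] [IsOrderedAddMonoid β]
  {f : α → β} {s : Set α}

theorem StrictMonoOn.abs_strictAntiOn_of_nonpos (hf : StrictMonoOn f s)
    (hs : ∀ x ∈ s, f x ≤ 0) : StrictAntiOn (fun x => |f x|) s :=
  hf.neg.congr fun x hx => (abs_of_nonpos (hs x hx)).symm

theorem StrictMonoOn.abs_strictMonoOn_of_nonneg (hf : StrictMonoOn f s)
    (hs : ∀ x ∈ s, 0 ≤ f x) : StrictMonoOn (fun x => |f x|) s :=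
  hf.congr fun x hx => (abs_of_nonneg (hs x hx)).symm

end AbsOfStrictMono

theorem strictMonoOn_sub_one_div_add_one :
    StrictMonoOn (fun s : ℝ => (s - 1) / (s + 1)) (Ioi (-1)) := by
  intro x (hx : -1 < x) y (hy : -1 < y) hxy
  rw [div_lt_div_iff₀ (by linarith) (by linarith)]
  linarith

theorem tendsto_sub_one_div_add_one_atTop :
    Tendsto (fun s : ℝ => (s - 1) / (s + 1)) atTop (nhds 1) := by
  have h : Tendsto (fun s : ℝ => 1 - 2 / (s + 1)) atTop (nhds (1 - 0)) :=
    tendsto_const_nhds.sub <|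
      tendsto_const_nhds.div_atTop (tendsto_atTop_add_const_right _ 1 tendsto_id)
  rw [sub_zero] at h
  refine h.congr' ?_
  filter_upwards [eventually_gt_atTop 0] with s hs
  field_simp
  ring

noncomputable def signedDiceError (α : ℝ) : ℝ :=
  (√(2 * α) - 1) / (√(2 * α) + 1)

theorem strictMonoOn_signedDiceError : StrictMonoOn signedDiceError (Ici 0) := by
  have hsqrt : StrictMonoOn (fun α : ℝ => √(2 * α)) (Ici 0) :=
    strictMonoOn_sqrt.comp ((strictMono_mul_left_of_pos (two_pos : (0 : ℝ) < 2)).strictMonoOn _)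
      fun α (hα : 0 ≤ α) => show 0 ≤ 2 * α by positivity
  exact strictMonoOn_sub_one_div_add_one.comp hsqrt
    fun α _ => show -1 < √(2 * α) by linarith [sqrt_nonneg (2 * α)]

theorem signedDiceError_half : signedDiceError (1 / 2) = 0 := by
  norm_num [signedDiceError]

theorem signedDiceError_nonpos {α : ℝ} (h₀ : 0 ≤ α) (h : α ≤ 1 / 2) : signedDiceError α ≤ 0 :=
  signedDiceError_half ▸ strictMonoOn_signedDiceError.monotoneOn h₀ (by norm_num) h

theorem signedDiceError_nonneg {α : ℝ} (h : 1 / 2 ≤ α) : 0 ≤ signedDiceError α :=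
  have half_nonneg : (0 : ℝ) ≤ 1 / 2 := by norm_num
  signedDiceError_half ▸ strictMonoOn_signedDiceError.monotoneOn half_nonneg (half_nonneg.trans h) h

theorem tendsto_signedDiceError_nhdsWithin_zero :
    Tendsto signedDiceError (nhdsWithin 0 (Ioi 0)) (nhds (-1)) := by
  have hsqrt : Tendsto (fun α : ℝ => √(2 * α)) (nhds 0) (nhds 0) :=
    (by fun_prop : Continuous fun α : ℝ => √(2 * α)).tendsto' 0 0 (by simp)
  have h := (hsqrt.sub_const 1).div (hsqrt.add_const 1) (by norm_num)
  rw [zero_sub, zero_add, div_one] at h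
  exact h.mono_left nhdsWithin_le_nhds

theorem tendsto_signedDiceError_atTop : Tendsto signedDiceError atTop (nhds 1) :=
  tendsto_sub_one_div_add_one_atTop.comp <|
    tendsto_sqrt_atTop.comp (tendsto_id.const_mul_atTop two_pos)

theorem tversky_dice_error_monotonicity :
    let f : ℝ → ℝ := fun α => |(Real.sqrt (2 * α) - 1) / (Real.sqrt (2 * α) + 1)|
    StrictAntiOn f (Set.Ioc (0:ℝ) (1/2)) ∧
    f (1/2) = 0 ∧
    StrictMonoOn f (Set.Ici (1/2 : ℝ)) ∧
    Tendsto f (nhdsWithin 0 (Set.Ioi 0)) (nhds 1) ∧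
    Tendsto f atTop (nhds 1) := by
  refine ⟨?_, ?_, ?_, ?_, ?_⟩
  · exact (strictMonoOn_signedDiceError.mono (Ioc_subset_Ioi_self.trans Ioi_subset_Ici_self))
      |>.abs_strictAntiOn_of_nonpos fun α hα => signedDiceError_nonpos hα.1.le hα.2
  · exact congrArg abs signedDiceError_half |>.trans abs_zero
  · exact (strictMonoOn_signedDiceError.mono (Ici_subset_Ici.mpr (by norm_num)))
      |>.abs_strictMonoOn_of_nonneg fun α hα => signedDiceError_nonneg hα
  · have h := tendsto_signedDiceError_nhdsWithin_zero.abs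
    rwa [abs_neg, abs_one] at h
  · have h := tendsto_signedDiceError_atTop.abs
    rwa [abs_one] at h
end
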